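/- arXiv:2408.13649 — 2 statements merged into one kernel-verified Lean document; each statement's English description precedes it below -/
import Mathlib

section
/- The vector N ~ MPMRF(λ, α, T) satisfies the local Markov property on T: for any two vertices u, w ∈ V with u ≠ w and (u, w) ∉ E, the random variables N_u and N_w are conditionally independent given the family (N_j : (u, j) ∈ E) of components at the neighbors of u. Hence N is a Markov random field on the tree T. -/
open MeasureTheory ProbabilityTheory
open scoped ProbabilityTheory

/-- The Poisson probability mass function with mean `lam`, evaluated at `k`. -/
noncomputable def poissonProb (lam : ℝ) (k : ℕ) : ℝ :=
  Real.exp (-lam) * lam ^ k / (Nat.factorial k)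

/-- The MPMRF construction: a tree-structured Markov random field with Poisson(`lam`)
marginals, built on a tree `G` rooted at `root` via the stochastic representation
`N_root = L_root` and `N_v = α_{(pa v, v)} ∘ N_{pa v} + L_v` for `v ≠ root`, where `∘`
denotes binomial thinning (realized through the i.i.d. Bernoulli indicators `I v i`),
the innovations `L_v` are Poisson, and all innovations and indicator sequences are
mutually independent. -/
structure MPMRF {V : Type} [Fintype V] [DecidableEq V]
    (G : SimpleGraph V) (lam : ℝ) (alpha : Sym2 V → ℝ)
    (Ω : Type) [MeasureSpace Ω] : Type where
  /-- the underlying graph is a tree -/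
  isTree : G.IsTree
  lam_pos : 0 < lam
  alpha_mem : ∀ e ∈ G.edgeSet, alpha e ∈ Set.Icc (0 : ℝ) 1
  /-- the chosen root -/
  root : V
  /-- the parent function of the rooted tree -/
  pa : V → V
  pa_adj : ∀ v, v ≠ root → G.Adj (pa v) v
  pa_dist : ∀ v, v ≠ root → G.dist root (pa v) + 1 = G.dist root v
  /-- innovation random variables -/
  L : V → Ω → ℕ
  /-- Bernoulli indicators used in the binomial thinnings -/
  I : V → ℕ → Ω → ℕ
  /-- the components of the Markov random field -/
  N : V → Ω → ℕ
  meas_L : ∀ v, Measurable (L v)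
  meas_I : ∀ v i, Measurable (I v i)
  meas_N : ∀ v, Measurable (N v)
  I_le_one : ∀ v i ω, I v i ω ≤ 1
  I_bern : ∀ v, v ≠ root → ∀ i,
    ℙ {ω | I v i ω = 1} = ENNReal.ofReal (alpha s(pa v, v))
  L_root_poisson : ∀ k, ℙ {ω | L root ω = k} = ENNReal.ofReal (poissonProb lam k)
  L_poisson : ∀ v, v ≠ root → ∀ k,
    ℙ {ω | L v ω = k} =
      ENNReal.ofReal (poissonProb (lam * (1 - alpha s(pa v, v))) k)
  /-- the innovations and all indicator variables are mutually independent -/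
  indep : iIndepFun
    (Sum.elim L (fun p : V × ℕ => I p.1 p.2)) ℙ
  N_root : N root = L root
  N_rec : ∀ v, v ≠ root → ∀ ω,
    N v ω = (∑ i ∈ Finset.range (N (pa v) ω), I v i ω) + L v ω

/-!
Conditioning on the neighbours of `u` cuts the tree at one of them. If `w` is not a descendant of
`u`, cut at `pa u`: `N_{pa u}` and `N_w` are functions of the noise outside the subtree of `u`,
while `N_u` and the values at the children of `u` are obtained from `N_{pa u}` by the noise inside
it. Otherwise `w` lies strictly below a child `j` of `u`; cut at `j`: `N_w` is obtained from `N_j`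
by the noise strictly below `j`, while `N_u` and the neighbour values are functions of the
remaining noise. Once the value at the cut is fixed, the two sides therefore depend on disjoint,
hence independent, parts of the noise, so on every atom `{neighbour values = σ}` the measure of
`{N_u ∈ s, N_w ∈ t}` is a product `F s * G t`. For a discrete conditioning variable this is
conditional independence.
-/

lemma Measurable.comp_countable_family {Ω ι β : Type*} {mΩ : MeasurableSpace Ω}
    [MeasurableSpace ι] [Countable ι] [MeasurableSingletonClass ι] [MeasurableSpace β]
    {g : Ω → ι} {h : ι → Ω → β} (hg : Measurable g) (hh : ∀ i, Measurable (h i)) :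
    Measurable fun ω => h (g ω) ω :=
  (measurable_from_prod_countable_left (f := fun p : Ω × ι => h p.2 p.1) hh).comp
    (measurable_id.prodMk hg)

section

variable {Ω β β' γ : Type*} [mΩ : MeasurableSpace Ω] {μ : Measure Ω} [mγ : MeasurableSpace γ]
  [Countable γ] [MeasurableSingletonClass γ] {X : Ω → γ}

lemma ae_measure_preimage_singleton_ne_zero (hX : Measurable X) :
    ∀ᵐ ω ∂μ, μ (X ⁻¹' {X ω}) ≠ 0 := by
  refine ae_of_ae_map (p := fun x => μ (X ⁻¹' {x}) ≠ 0) hX.aemeasurable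
    (ae_iff_of_countable.mpr fun x hx => ?_)
  rwa [Measure.map_apply hX (measurableSet_singleton x)] at hx

variable [StandardBorelSpace Ω] [Nonempty Ω] [IsFiniteMeasure μ]

lemma condExp_comap_ae_eq_inv_mul_measure_inter (hX : Measurable X) {A : Set Ω}
    (hA : MeasurableSet A) :
    μ⟦A | mγ.comap X⟧ =ᵐ[μ] fun ω => ((μ (X ⁻¹' {X ω}))⁻¹ * μ (X ⁻¹' {X ω} ∩ A)).toReal := by
  filter_upwards [(condDistrib_ae_eq_condExp hX measurable_id hA).symm,
    ae_measure_preimage_singleton_ne_zero hX] with ω hω h0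
  rw [← Measure.map_apply hX (measurableSet_singleton _)] at h0
  rw [Set.preimage_id] at hω
  rw [hω, measureReal_def, condDistrib_apply_of_ne_zero measurable_id _ h0,
    Measure.map_apply hX (measurableSet_singleton _),
    Measure.map_apply (hX.prodMk measurable_id) ((measurableSet_singleton _).prod hA)]
  rfl

variable [MeasurableSpace β] [MeasurableSpace β']

theorem condIndepFun_comap_of_measure_inter_eq_mul (hX : Measurable X) {f : Ω → β} {g : Ω → β'}
    (hf : Measurable f) (hg : Measurable g) (hle : mγ.comap X ≤ mΩ)
    (h : ∀ x, ∃ F : Set β → ENNReal, ∃ G : Set β' → ENNReal, ∀ s t,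
      μ (X ⁻¹' {x} ∩ f ⁻¹' s ∩ g ⁻¹' t) = F s * G t) :
    CondIndepFun (mγ.comap X) hle f g μ := by
  rw [condIndepFun_iff_condExp_inter_preimage_eq_mul hf hg]
  intro s t hs ht
  filter_upwards [condExp_comap_ae_eq_inv_mul_measure_inter hX ((hf hs).inter (hg ht)),
    condExp_comap_ae_eq_inv_mul_measure_inter hX (hf hs),
    condExp_comap_ae_eq_inv_mul_measure_inter hX (hg ht),
    ae_measure_preimage_singleton_ne_zero hX] with ω hst hs' ht' h0
  obtain ⟨F, G, hFG⟩ := h (X ω)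
  have h_atom : μ (X ⁻¹' {X ω}) = F .univ * G .univ := by simpa using hFG .univ .univ
  have h_s : μ (X ⁻¹' {X ω} ∩ f ⁻¹' s) = F s * G .univ := by simpa using hFG s .univ
  have h_t : μ (X ⁻¹' {X ω} ∩ g ⁻¹' t) = F .univ * G t := by
    simpa [Set.inter_right_comm] using hFG .univ t
  have h_ne_top : F .univ * G .univ ≠ ⊤ := h_atom ▸ measure_ne_top μ _
  rw [h_atom] at h0
  rw [hst, hs', ht', ← ENNReal.toReal_mul, ← Set.inter_assoc, hFG, h_s, h_t, h_atom]
  congr 1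
  calc (F .univ * G .univ)⁻¹ * (F s * G t)
      = (F .univ * G .univ)⁻¹ * (F s * G t) * ((F .univ * G .univ)⁻¹ * (F .univ * G .univ)) := by
        rw [ENNReal.inv_mul_cancel h0 h_ne_top, mul_one]
    _ = _ := by ring

end

namespace MPMRF

open SimpleGraph

variable {V : Type} [Fintype V] [DecidableEq V] {G : SimpleGraph V} {lam : ℝ}
  {alpha : Sym2 V → ℝ} {Ω : Type} [MeasureSpace Ω] (M : MPMRF G lam alpha Ω)

noncomputable def depth (v : V) : ℕ := G.dist M.root v

def IsParent (x v : V) : Prop := v ≠ M.root ∧ M.pa v = x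

def IsAncestor : V → V → Prop := Relation.ReflTransGen M.IsParent

variable {M} {x y v : V}

lemma depth_root : M.depth M.root = 0 := dist_self

lemma depth_pa (hv : v ≠ M.root) : M.depth (M.pa v) + 1 = M.depth v := M.pa_dist v hv

lemma isParent_pa (hv : v ≠ M.root) : M.IsParent (M.pa v) v := ⟨hv, rfl⟩

lemma IsParent.depth_add_one (h : M.IsParent x v) : M.depth x + 1 = M.depth v :=
  h.2 ▸ depth_pa h.1

lemma ne_root_of_depth_pos (h : 0 < M.depth v) : v ≠ M.root := by
  rintro rfl
  simp [depth_root] at h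

lemma eq_of_adj_of_depth_add_one (hx : G.Adj x v) (hy : G.Adj y v)
    (hxv : M.depth x + 1 = M.depth v) (hyv : M.depth y + 1 = M.depth v) : x = y := by
  obtain ⟨p, -, hp⟩ := M.isTree.connected.exists_path_of_dist M.root x
  obtain ⟨q, -, hq⟩ := M.isTree.connected.exists_path_of_dist M.root y
  have hpx : (p.concat hx).IsPath := by
    apply Walk.isPath_of_length_eq_dist
    rw [Walk.length_concat, hp]
    exact hxv
  have hqy : (q.concat hy).IsPath := by
    apply Walk.isPath_of_length_eq_dist
    rw [Walk.length_concat, hq]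
    exact hyv
  obtain ⟨h, -⟩ := Walk.concat_inj ((M.isTree.existsUnique_path M.root v).unique hpx hqy)
  exact h

lemma isParent_or_isParent_of_adj (h : G.Adj x y) : M.IsParent x y ∨ M.IsParent y x := by
  have key : ∀ {x y}, G.Adj x y → M.depth x + 1 = M.depth y → M.IsParent x y := by
    intro x y h hxy
    have hy : y ≠ M.root := ne_root_of_depth_pos (by omega)
    exact ⟨hy, eq_of_adj_of_depth_add_one (M.pa_adj y hy) h (depth_pa hy) hxy⟩
  rcases M.isTree.dist_eq_dist_add_one_of_adj M.root h with hxy | hxy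
  · exact .inr (key h.symm hxy.symm)
  · exact .inl (key h hxy.symm)

lemma depth_le_depth_add_one_of_adj (h : G.Adj x y) : M.depth y ≤ M.depth x + 1 := by
  rcases isParent_or_isParent_of_adj (M := M) h with h | h <;> have := h.depth_add_one <;> omega

lemma IsAncestor.depth_le (h : M.IsAncestor x v) : M.depth x ≤ M.depth v := by
  induction h with
  | refl => exact le_rfl
  | tail _ hp ih => exact ih.trans (hp.depth_add_one ▸ Nat.le_succ _)

lemma IsAncestor.ne_root_and_pa (h : M.IsAncestor x v) (hne : x ≠ v) :
    v ≠ M.root ∧ M.IsAncestor x (M.pa v) := by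
  obtain rfl | ⟨y, hxy, hy, rfl⟩ := h.cases_tail
  · exact absurd rfl hne
  · exact ⟨hy, hxy⟩

lemma IsAncestor.depth_lt (h : M.IsAncestor x v) (hne : x ≠ v) : M.depth x < M.depth v := by
  obtain ⟨hv, hpa⟩ := h.ne_root_and_pa hne
  have := depth_pa hv
  have := hpa.depth_le
  omega

lemma IsAncestor.of_pa (h : M.IsAncestor x (M.pa v)) (hv : v ≠ M.root) : M.IsAncestor x v :=
  h.tail (isParent_pa hv)

lemma isAncestor_root (v : V) : M.IsAncestor M.root v := by
  induction hd : M.depth v using Nat.strong_induction_on generalizing v with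
  | _ n ih =>
    by_cases hv : v = M.root
    · exact hv ▸ .refl
    · exact (ih _ (by have := depth_pa hv; omega) (M.pa v) rfl).of_pa hv

lemma IsAncestor.exists_isParent (h : M.IsAncestor x v) (hne : x ≠ v) :
    ∃ j, M.IsParent x j ∧ M.IsAncestor j v := by
  obtain rfl | hj := h.cases_head
  · exact absurd rfl hne
  · exact hj

variable (M)

def noise : V ⊕ V × ℕ → Ω → ℕ := Sum.elim M.L fun p => M.I p.1 p.2

/-- The σ-algebra of the innovations and thinning indicators attached to the vertices of `S`. -/
abbrev noiseSigma (S : Set V) : MeasurableSpace Ω :=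
  ⨆ k ∈ Sum.elim id Prod.fst ⁻¹' S, MeasurableSpace.comap (M.noise k) inferInstance

/-- `step v m` is `α_{(pa v, v)} ∘ m + L_v`, the value of `N_v` when `N_{pa v} = m`. -/
noncomputable def step (v : V) (m : ℕ) (ω : Ω) : ℕ := (∑ i ∈ Finset.range m, M.I v i ω) + M.L v ω

variable {M}

lemma N_eq_step (hv : v ≠ M.root) (ω : Ω) : M.N v ω = M.step v (M.N (M.pa v) ω) ω :=
  M.N_rec v hv ω

lemma measurable_noise (k : V ⊕ V × ℕ) : Measurable (M.noise k) := by
  rcases k with v | ⟨v, i⟩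
  exacts [M.meas_L v, M.meas_I v i]

lemma measurable_noise_noiseSigma {S : Set V} {k : V ⊕ V × ℕ} (hk : Sum.elim id Prod.fst k ∈ S) :
    Measurable[M.noiseSigma S] (M.noise k) :=
  (comap_measurable (M.noise k)).mono
    (le_iSup₂ (f := fun k _ => MeasurableSpace.comap (M.noise k) inferInstance) k hk) le_rfl

lemma measurable_step {S : Set V} (hv : v ∈ S) (m : ℕ) : Measurable[M.noiseSigma S] (M.step v m) :=
  (Finset.measurable_sum _ fun i _ => measurable_noise_noiseSigma (k := .inr (v, i)) hv).add
    (measurable_noise_noiseSigma (k := .inl v) hv)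

lemma measure_inter_eq_mul_of_disjoint {S T : Set V} (hST : Disjoint S T) {A B : Set Ω}
    (hA : MeasurableSet[M.noiseSigma S] A) (hB : MeasurableSet[M.noiseSigma T] B) :
    ℙ (A ∩ B) = ℙ A * ℙ B :=
  (Indep_iff _ _ _).mp (indep_iSup_of_disjoint (fun k => (measurable_noise k).comap_le)
    M.indep.iIndep (hST.preimage _)) A B hA hB

variable (M)

open Classical in
/-- `N` recomputed from the noise by its defining recursion, with its values on `F` set to `c`. -/
noncomputable def clamp (F : Set V) (c : V → ℕ) (v : V) : Ω → ℕ :=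
  if v ∈ F then fun _ => c v
  else if v = M.root then M.L v
  else fun ω => M.step v (clamp F c (M.pa v) ω) ω
termination_by M.depth v
decreasing_by exact depth_pa ‹_› ▸ Nat.lt_succ_self _

variable {M}

lemma clamp_eq_N {F : Set V} {c : V → ℕ} {ω : Ω} (hω : ∀ x ∈ F, M.N x ω = c x) (v : V) :
    M.clamp F c v ω = M.N v ω := by
  induction hd : M.depth v using Nat.strong_induction_on generalizing v with
  | _ n ih =>
    rw [clamp]
    split_ifs with hF hv
    · exact (hω v hF).symm
    · rw [hv, M.N_root]
    · beta_reduce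
      rw [ih _ (by have := depth_pa hv; omega) (M.pa v) rfl, N_eq_step hv]

lemma measurable_clamp {F U : Set V} (c : V → ℕ)
    (hU : ∀ v ∈ U, v ∉ F → v ≠ M.root → M.pa v ∈ U ∪ F) (hv : v ∈ U ∪ F) :
    Measurable[M.noiseSigma U] (M.clamp F c v) := by
  induction hd : M.depth v using Nat.strong_induction_on generalizing v with
  | _ n ih =>
    rw [clamp]
    split_ifs with hF hroot
    · exact measurable_const
    · have hvU : v ∈ U := hv.resolve_right hF
      exact measurable_noise_noiseSigma (k := .inl v) hvU
    · have hvU : v ∈ U := hv.resolve_right hF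
      have hpa := ih _ (by have := depth_pa hroot; omega) (hU v hvU hF hroot) rfl
      exact hpa.comp_countable_family (measurable_step hvU)

lemma measurable_N {U : Set V} (hU : ∀ v ∈ U, v ≠ M.root → M.pa v ∈ U) (hv : v ∈ U) :
    Measurable[M.noiseSigma U] (M.N v) := by
  have hN : M.clamp ∅ 0 v = M.N v := funext fun _ => clamp_eq_N (by simp) v
  exact hN ▸ measurable_clamp 0 (by simpa using hU) (by simpa using hv)

variable (M) in
def neighborValues (u : V) (ω : Ω) : {j // G.Adj u j} → ℕ := fun j => M.N j ω

lemma measurable_neighborValues {U : Set V} (hU : ∀ v ∈ U, v ≠ M.root → M.pa v ∈ U) {u : V}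
    (hu : ∀ j, G.Adj u j → j ∈ U) : Measurable[M.noiseSigma U] (M.neighborValues u) :=
  @measurable_pi_lambda _ _ _ (M.noiseSigma U) _ _ fun j => measurable_N hU (hu j j.2)

lemma neighborValues_preimage_inter_eq_clamp {u j : V} (hj : G.Adj u j) {σ : {i // G.Adj u i} → ℕ}
    {c : V → ℕ} (hc : c j = σ ⟨j, hj⟩) (s : Set ℕ) (B : Set Ω) :
    M.neighborValues u ⁻¹' {σ} ∩ M.N u ⁻¹' s ∩ B
      = (M.clamp {j} c u ⁻¹' s ∩ (fun ω (i : {i // G.Adj u i}) => M.clamp {j} c i ω) ⁻¹' {σ})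
        ∩ (M.N j ⁻¹' {c j} ∩ B) := by
  ext ω
  by_cases hω : M.N j ω = c j
  · have hcl : ∀ v, M.clamp {j} c v ω = M.N v ω := clamp_eq_N (by simpa using hω)
    simp only [Set.mem_inter_iff, Set.mem_preimage, Set.mem_singleton_iff, hcl, hω]
    tauto
  · have hσ : M.neighborValues u ω ≠ σ := fun h => hω (hc ▸ congrFun h ⟨j, hj⟩)
    simp [hσ, hω]

lemma neighborValues_preimage_inter_preimage_eq_clamp {u j : V} (hj : G.Adj u j)
    {σ : {i // G.Adj u i} → ℕ} {c : V → ℕ} (hc : c j = σ ⟨j, hj⟩) (A : Set Ω) (v : V)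
    (t : Set ℕ) :
    M.neighborValues u ⁻¹' {σ} ∩ A ∩ M.N v ⁻¹' t
      = M.neighborValues u ⁻¹' {σ} ∩ A ∩ M.clamp {j} c v ⁻¹' t := by
  ext ω
  by_cases hω : M.N j ω = c j
  · have hcl : ∀ v, M.clamp {j} c v ω = M.N v ω := clamp_eq_N (by simpa using hω)
    simp only [Set.mem_inter_iff, Set.mem_preimage, hcl]
  · have hσ : M.neighborValues u ω ≠ σ := fun h => hω (hc ▸ congrFun h ⟨j, hj⟩)
    simp [hσ]

lemma exists_measure_eq_mul_of_not_isAncestor {u w : V} (hw : ¬ M.IsAncestor u w)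
    (σ : {j // G.Adj u j} → ℕ) : ∃ F G' : Set ℕ → ENNReal, ∀ s t,
      ℙ (M.neighborValues u ⁻¹' {σ} ∩ M.N u ⁻¹' s ∩ M.N w ⁻¹' t) = F s * G' t := by
  have hu : u ≠ M.root := fun h => hw (h ▸ isAncestor_root w)
  set p := M.pa u
  have hp : G.Adj u p := (M.pa_adj u hu).symm
  set D := {v | M.IsAncestor u v}
  set c : V → ℕ := fun _ => σ ⟨p, hp⟩
  have hD : ∀ v ∈ D, v ∉ ({p} : Set V) → v ≠ M.root → M.pa v ∈ D ∪ {p} := by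
    intro v hv _ _
    by_cases huv : u = v
    · exact .inr (huv ▸ rfl)
    · exact .inl (hv.ne_root_and_pa huv).2
  have hDc : ∀ v ∈ Dᶜ, v ≠ M.root → M.pa v ∈ Dᶜ := fun v hv hroot hpv => hv (hpv.of_pa hroot)
  have hpD : p ∈ Dᶜ := fun h => h.depth_le.not_gt (depth_pa hu ▸ Nat.lt_succ_self _)
  have h_nbr : ∀ j, G.Adj u j → j ∈ D ∪ {p} := by
    intro j hj
    rcases isParent_or_isParent_of_adj (M := M) hj with h | h
    · exact .inl (.single h)
    · exact .inr h.2.symm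
  refine ⟨fun s => ℙ (M.clamp {p} c u ⁻¹' s
      ∩ (fun ω (j : {j // G.Adj u j}) => M.clamp {p} c j ω) ⁻¹' {σ}),
    fun t => ℙ (M.N p ⁻¹' {c p} ∩ M.N w ⁻¹' t), fun s t => ?_⟩
  rw [neighborValues_preimage_inter_eq_clamp hp (c := c) rfl]
  refine measure_inter_eq_mul_of_disjoint (M := M) (S := D) disjoint_compl_right ?_ ?_
  · exact (measurable_clamp c hD (.inl .refl) .of_discrete).inter
      (@measurable_pi_lambda _ _ _ (M.noiseSigma D) _ _
        (fun (j : {j // G.Adj u j}) => measurable_clamp c hD (h_nbr j j.2)) _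
        (measurableSet_singleton σ))
  · exact (measurable_N hDc hpD (measurableSet_singleton _)).inter
      (measurable_N hDc hw .of_discrete)

lemma exists_measure_eq_mul_of_isAncestor {u w : V} (hw : M.IsAncestor u w) (huw : u ≠ w)
    (hnadj : ¬ G.Adj u w) (σ : {j // G.Adj u j} → ℕ) : ∃ F G' : Set ℕ → ENNReal, ∀ s t,
      ℙ (M.neighborValues u ⁻¹' {σ} ∩ M.N u ⁻¹' s ∩ M.N w ⁻¹' t) = F s * G' t := by
  obtain ⟨j, hj, hjw⟩ := hw.exists_isParent huw
  have hj_adj : G.Adj u j := hj.2 ▸ M.pa_adj j hj.1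
  have hjw_ne : j ≠ w := by
    rintro rfl
    exact hnadj hj_adj
  set U := {v | M.IsAncestor j v ∧ v ≠ j}
  set c : V → ℕ := fun _ => σ ⟨j, hj_adj⟩
  have h_depth : ∀ v ∈ U, M.depth u + 1 < M.depth v := fun v hv =>
    hj.depth_add_one ▸ hv.1.depth_lt (Ne.symm hv.2)
  have hU : ∀ v ∈ U, v ∉ ({j} : Set V) → v ≠ M.root → M.pa v ∈ U ∪ {j} := by
    intro v ⟨hjv, hne⟩ _ _
    by_cases h : M.pa v = j
    · exact .inr h
    · exact .inl ⟨(hjv.ne_root_and_pa (Ne.symm hne)).2, h⟩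
  have hUc : ∀ v ∈ Uᶜ, v ≠ M.root → M.pa v ∈ Uᶜ := by
    intro v hv hroot hpv
    refine hv ⟨hpv.1.of_pa hroot, ?_⟩
    rintro rfl
    have := h_depth _ hpv
    rw [hj.2] at this
    omega
  have hu : u ∈ Uᶜ := fun h => by have := h_depth u h; omega
  have h_nbr : ∀ y, G.Adj u y → y ∈ Uᶜ := fun y hy h => by
    have := h_depth y h
    have := depth_le_depth_add_one_of_adj (M := M) hy
    omega
  refine ⟨fun s => ℙ (M.neighborValues u ⁻¹' {σ} ∩ M.N u ⁻¹' s),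
    fun t => ℙ (M.clamp {j} c w ⁻¹' t), fun s t => ?_⟩
  rw [neighborValues_preimage_inter_preimage_eq_clamp hj_adj (c := c) rfl]
  refine measure_inter_eq_mul_of_disjoint (M := M) (T := U) disjoint_compl_left ?_ ?_
  · exact (measurable_neighborValues hUc h_nbr (measurableSet_singleton σ)).inter
      (measurable_N hUc hu .of_discrete)
  · exact measurable_clamp c hU (.inl ⟨hjw, hjw_ne.symm⟩) .of_discrete

lemma exists_measure_eq_mul {u w : V} (huw : u ≠ w) (hnadj : ¬ G.Adj u w)
    (σ : {j // G.Adj u j} → ℕ) : ∃ F G' : Set ℕ → ENNReal, ∀ s t,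
      ℙ (M.neighborValues u ⁻¹' {σ} ∩ M.N u ⁻¹' s ∩ M.N w ⁻¹' t) = F s * G' t := by
  by_cases hw : M.IsAncestor u w
  · exact exists_measure_eq_mul_of_isAncestor hw huw hnadj σ
  · exact exists_measure_eq_mul_of_not_isAncestor hw σ

end MPMRF

/-- The MPMRF satisfies the local Markov property on the tree: for any
two vertices `u ≠ w` not joined by an edge, `N_u` and `N_w` are conditionally independent
given the σ-algebra generated by the family `(N_j : (u,j) ∈ E)` of components at the
neighbours of `u`. Hence `N` is a Markov random field on the tree. -/
theorem mpmrf_local_markov {V : Type} [Fintype V] [DecidableEq V]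
    (G : SimpleGraph V) (lam : ℝ) (alpha : Sym2 V → ℝ)
    (Ω : Type) [MeasureSpace Ω] [StandardBorelSpace Ω]
    [IsProbabilityMeasure (ℙ : Measure Ω)]
    (M : MPMRF G lam alpha Ω)
    (u w : V) (huw : u ≠ w) (hnadj : ¬ G.Adj u w)
    (hle : MeasurableSpace.comap
        (fun ω => fun j : {j : V // G.Adj u j} => M.N j ω) MeasurableSpace.pi
      ≤ (inferInstance : MeasurableSpace Ω)) :
    CondIndepFun
      (MeasurableSpace.comap
        (fun ω => fun j : {j : V // G.Adj u j} => M.N j ω) MeasurableSpace.pi)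
      hle (M.N u) (M.N w) ℙ := by
  have := nonempty_of_isProbabilityMeasure (ℙ : Measure Ω)
  exact condIndepFun_comap_of_measure_inter_eq_mul
    (measurable_pi_lambda (M.neighborValues u) fun j => M.meas_N j) (M.meas_N u) (M.meas_N w) hle
    (MPMRF.exists_measure_eq_mul huw hnadj)
end

section
/- Joint pmf: let N ~ MPMRF(λ, α, T) and choose any root r ∈ V. Then for every x = (x_v)_{v∈V} ∈ ℕ^V, Pr(∩_{v∈V}{N_v = x_v}) = (e^{−λ} λ^{x_r} / x_r!) · ∏_{v∈V\{r}} Σ_{k=0}^{min(x_{pa(v)}, x_v)} [ e^{−λ(1−α_{(pa(v),v)})} (λ(1−α_{(pa(v),v)}))^{x_v−k} / (x_v−k)! ] · C(x_{pa(v)}, k) · α_{(pa(v),v)}^k (1−α_{(pa(v),v)})^{x_{pa(v)}−k}, where C(n,k) denotes the binomial coefficient. -/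
open MeasureTheory ProbabilityTheory
open scoped ProbabilityTheory

open Finset

/-! Add the vertices one at a time, always one farthest from the root, so that its parent is
already present. On the event that the vertices `U` added so far take the values `x`, the new
vertex `v` equals `T + L v` with `T = ∑_{i < x (pa v)} I v i`. The event is measurable for the
σ-algebra generated by the noise at `U`, while `T + L v` only involves the noise at `v`, so the
two are independent. Finally `T` is binomial and independent of the Poisson `L v`, and the
convolution of their pmfs is the factor contributed by `v`. -/

section Thinning

variable {Ω : Type*} {mΩ : MeasurableSpace Ω} {μ : Measure Ω}

noncomputable def binomialProb (a : ℝ) (n k : ℕ) : ℝ :=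
  n.choose k * a ^ k * (1 - a) ^ (n - k)

lemma binomialProb_nonneg {a : ℝ} (ha : a ∈ Set.Icc (0 : ℝ) 1) (n k : ℕ) :
    0 ≤ binomialProb a n k := by
  obtain ⟨h0, h1⟩ := ha
  have := sub_nonneg.2 h1
  unfold binomialProb
  positivity

lemma binomialProb_succ_zero (a : ℝ) (n : ℕ) :
    binomialProb a (n + 1) 0 = (1 - a) * binomialProb a n 0 := by
  simp [binomialProb, pow_succ, mul_comm]

lemma binomialProb_succ_succ (a : ℝ) (n k : ℕ) :
    binomialProb a (n + 1) (k + 1)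
      = (1 - a) * binomialProb a n (k + 1) + a * binomialProb a n k := by
  rcases le_or_gt (k + 1) n with h | h
  · obtain ⟨j, rfl⟩ := Nat.exists_eq_add_of_le h
    simp only [binomialProb, Nat.choose_succ_succ', Nat.cast_add,
      show k + 1 + j + 1 - (k + 1) = j + 1 by omega, show k + 1 + j - (k + 1) = j by omega,
      show k + 1 + j - k = j + 1 by omega]
    ring
  · simp [binomialProb, Nat.choose_succ_succ', Nat.choose_eq_zero_of_lt h,
      show n + 1 - (k + 1) = n - k by omega]
    ring

theorem measurable_randomSum {g : Ω → ℕ} {X : ℕ → Ω → ℕ} (hg : Measurable g)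
    (hX : ∀ i, Measurable (X i)) : Measurable fun ω => ∑ i ∈ range (g ω), X i ω :=
  (measurable_from_prod_countable_left (f := fun p : Ω × ℕ => ∑ i ∈ range p.2, X i p.1)
    fun n => Finset.measurable_sum (range n) fun i _ => hX i).comp (measurable_id.prodMk hg)

theorem measure_add_eq_sum_range_min {T L : Ω → ℕ} (hTL : T ⟂ᵢ[μ] L) (hT : Measurable T)
    (hL : Measurable L) {n : ℕ} (hTn : ∀ ω, T ω ≤ n) (m : ℕ) :
    μ {ω | T ω + L ω = m}
      = ∑ k ∈ range (min n m + 1), μ {ω | T ω = k} * μ {ω | L ω = m - k} := by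
  have hsplit : {ω | T ω + L ω = m} = ⋃ k ∈ range (min n m + 1), T ⁻¹' {k} ∩ L ⁻¹' {m - k} := by
    ext ω
    have := hTn ω
    simp only [Set.mem_ofPred_eq, Set.mem_iUnion, Set.mem_inter_iff, Set.mem_preimage,
      Set.mem_singleton_iff, mem_range, exists_prop]
    constructor
    · intro h
      exact ⟨T ω, by omega, rfl, by omega⟩
    · rintro ⟨k, hk, rfl, hL⟩
      omega
  have hdisj : (range (min n m + 1) : Set ℕ).PairwiseDisjoint
      fun k => T ⁻¹' {k} ∩ L ⁻¹' {m - k} :=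
    fun k _ l _ hkl => (Set.disjoint_singleton.2 hkl).preimage T |>.mono
      Set.inter_subset_left Set.inter_subset_left
  rw [hsplit, measure_biUnion_finset hdisj fun k _ =>
    (hT (measurableSet_singleton k)).inter (hL (measurableSet_singleton _))]
  exact sum_congr rfl fun k _ =>
    hTL.measure_inter_preimage_eq_mul _ _ (measurableSet_singleton _) (measurableSet_singleton _)

theorem measure_sum_range_eq_binomialProb [IsProbabilityMeasure μ] {X : ℕ → Ω → ℕ}
    (hX : iIndepFun X μ) (hmeas : ∀ i, Measurable (X i)) (hle : ∀ i ω, X i ω ≤ 1) {a : ℝ}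
    (ha : a ∈ Set.Icc (0 : ℝ) 1) (hbern : ∀ i, μ {ω | X i ω = 1} = ENNReal.ofReal a)
    (n k : ℕ) : μ {ω | ∑ i ∈ range n, X i ω = k} = ENNReal.ofReal (binomialProb a n k) := by
  have hzero (i : ℕ) : μ {ω | X i ω = 0} = ENNReal.ofReal (1 - a) := by
    have hcompl : {ω | X i ω = 0} = {ω | X i ω = 1}ᶜ := by
      ext ω
      have := hle i ω
      simp only [Set.mem_ofPred_eq, Set.mem_compl_iff]
      omega
    rw [hcompl, prob_compl_eq_one_sub (s := {ω | X i ω = 1})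
      (hmeas i (measurableSet_singleton 1)), hbern,
      ENNReal.ofReal_sub _ ha.1, ENNReal.ofReal_one]
  have h1a : 0 ≤ 1 - a := sub_nonneg.2 ha.2
  induction n generalizing k with
  | zero => cases k <;> simp [binomialProb]
  | succ n ih =>
    have hindep : X n ⟂ᵢ[μ] fun ω => ∑ i ∈ range n, X i ω := by
      simpa only [Finset.sum_fn] using
        (hX.indepFun_finsetSum_of_notMem hmeas notMem_range_self).symm
    have hevent : {ω | ∑ i ∈ range (n + 1), X i ω = k}
        = {ω | X n ω + ∑ i ∈ range n, X i ω = k} := by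
      ext ω
      simp [sum_range_succ, add_comm]
    rw [hevent, measure_add_eq_sum_range_min hindep (hmeas n)
      (Finset.measurable_sum _ fun i _ => hmeas i) (hle n)]
    cases k with
    | zero =>
      simp only [_root_.min_zero, zero_add, range_one, sum_singleton, hzero, ih, Nat.sub_zero]
      rw [← ENNReal.ofReal_mul h1a, binomialProb_succ_zero]
    | succ k =>
      simp only [min_eq_left (Nat.le_add_left 1 k), sum_range_succ, range_one, sum_singleton,
        hzero, hbern, ih, Nat.sub_zero, Nat.add_sub_cancel]
      have hb := binomialProb_nonneg ha n
      rw [← ENNReal.ofReal_mul h1a, ← ENNReal.ofReal_mul ha.1,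
        ← ENNReal.ofReal_add (mul_nonneg h1a (hb _)) (mul_nonneg ha.1 (hb _)),
        binomialProb_succ_succ]

end Thinning

lemma poissonProb_nonneg {lam : ℝ} (h : 0 ≤ lam) (k : ℕ) : 0 ≤ poissonProb lam k := by
  unfold poissonProb
  positivity

noncomputable def thinningTransitionProb (lam a : ℝ) (n m : ℕ) : ℝ :=
  ∑ k ∈ range (min n m + 1), poissonProb (lam * (1 - a)) (m - k) * binomialProb a n k

lemma thinningTransitionProb_nonneg {lam a : ℝ} (hlam : 0 ≤ lam) (ha : a ∈ Set.Icc (0 : ℝ) 1)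
    (n m : ℕ) : 0 ≤ thinningTransitionProb lam a n m :=
  sum_nonneg fun _ _ => mul_nonneg
    (poissonProb_nonneg (mul_nonneg hlam (sub_nonneg.2 ha.2)) _) (binomialProb_nonneg ha _ _)

namespace MPMRF

variable {V : Type} [Fintype V] [DecidableEq V] {G : SimpleGraph V} {lam : ℝ}
  {alpha : Sym2 V → ℝ} {Ω : Type} [MeasureSpace Ω] (M : MPMRF G lam alpha Ω)

def family : V ⊕ V × ℕ → Ω → ℕ := Sum.elim M.L fun p => M.I p.1 p.2

lemma measurable_family : ∀ j, Measurable (M.family j)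
  | .inl v => M.meas_L v
  | .inr (v, i) => M.meas_I v i

/-- `inl v` indexes the innovation `L v`, `inr (v, i)` the indicator `I v i`; both sit at `v`. -/
abbrev sigmaAt (U : Set V) : MeasurableSpace Ω :=
  ⨆ j ∈ Sum.elim id Prod.fst ⁻¹' U, MeasurableSpace.comap (M.family j) inferInstance

lemma sigmaAt_le (U : Set V) : M.sigmaAt U ≤ MeasureSpace.toMeasurableSpace :=
  iSup₂_le fun j _ => (M.measurable_family j).comap_le

lemma indep_sigmaAt {U U' : Set V} (h : Disjoint U U') :
    Indep (M.sigmaAt U) (M.sigmaAt U') ℙ :=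
  indep_iSup_of_disjoint (fun j => (M.measurable_family j).comap_le) M.indep.iIndep
    (h.preimage _)

lemma measurable_family_sigmaAt {U : Set V} {j : V ⊕ V × ℕ} (hj : Sum.elim id Prod.fst j ∈ U) :
    Measurable[M.sigmaAt U] (M.family j) :=
  (comap_measurable (M.family j)).mono
    (le_iSup₂ (f := fun j _ => MeasurableSpace.comap (M.family j) inferInstance) j hj) le_rfl

lemma measurable_N_sigmaAt {U : Set V} (hU : ∀ u ∈ U, u ≠ M.root → M.pa u ∈ U) {u : V}
    (hu : u ∈ U) : Measurable[M.sigmaAt U] (M.N u) := by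
  induction hd : G.dist M.root u using Nat.strong_induction_on generalizing u with
  | _ d ih =>
    by_cases hr : u = M.root
    · subst hr
      rw [M.N_root]
      exact M.measurable_family_sigmaAt (j := .inl M.root) hu
    · have hpa := ih _ (by have := M.pa_dist u hr; omega) (hU u hu hr) rfl
      rw [funext (M.N_rec u hr)]
      exact (measurable_randomSum hpa fun i =>
          M.measurable_family_sigmaAt (j := .inr (u, i)) hu).add
        (M.measurable_family_sigmaAt (j := .inl u) hu)

lemma alpha_mem_Icc {v : V} (hv : v ≠ M.root) : alpha s(M.pa v, v) ∈ Set.Icc (0 : ℝ) 1 :=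
  M.alpha_mem _ (G.mem_edgeSet.2 (M.pa_adj v hv))

lemma measurableSet_N_eq_on {U : Finset V} (hU : ∀ u ∈ U, u ≠ M.root → M.pa u ∈ U)
    (x : V → ℕ) : MeasurableSet[M.sigmaAt U] {ω | ∀ u ∈ U, M.N u ω = x u} := by
  simp only [Set.ofPred_forall]
  exact .iInter fun u => .iInter fun hu =>
    M.measurable_N_sigmaAt hU (U := U) hu (measurableSet_singleton (x u))

variable [IsProbabilityMeasure (ℙ : Measure Ω)]

lemma measure_thinning_eq_binomialProb {v : V} (hv : v ≠ M.root) (n k : ℕ) :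
    ℙ {ω | ∑ i ∈ range n, M.I v i ω = k} = ENNReal.ofReal (binomialProb (alpha s(M.pa v, v)) n k) :=
  measure_sum_range_eq_binomialProb (X := M.I v)
    (M.indep.precomp (g := fun i => .inr (v, i)) fun _ _ h => by simpa using h)
    (M.meas_I v) (M.I_le_one v) (M.alpha_mem_Icc hv) (M.I_bern v hv) n k

lemma measure_N_eq_on_insert (x : V → ℕ) {U : Finset V}
    (hU : ∀ u ∈ U, u ≠ M.root → M.pa u ∈ U) {v : V} (hv : v ≠ M.root) (hvU : v ∉ U)
    (hpa : M.pa v ∈ U) :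
    ℙ {ω | ∀ u ∈ insert v U, M.N u ω = x u}
      = ℙ {ω | ∀ u ∈ U, M.N u ω = x u}
        * ENNReal.ofReal (thinningTransitionProb lam (alpha s(M.pa v, v)) (x (M.pa v)) (x v)) := by
  set T : Ω → ℕ := fun ω => ∑ i ∈ range (x (M.pa v)), M.I v i ω
  have hT : Measurable[M.sigmaAt {v}] T :=
    Finset.measurable_sum _ fun i _ => M.measurable_family_sigmaAt (j := .inr (v, i)) rfl
  have hL : Measurable[M.sigmaAt {v}] (M.L v) := M.measurable_family_sigmaAt (j := .inl v) rfl
  have hevent : {ω | ∀ u ∈ insert v U, M.N u ω = x u}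
      = {ω | ∀ u ∈ U, M.N u ω = x u} ∩ {ω | T ω + M.L v ω = x v} := by
    ext ω
    simp only [Set.mem_ofPred_eq, Set.mem_inter_iff, forall_mem_insert]
    constructor
    · rintro ⟨hNv, hNU⟩
      exact ⟨hNU, by rw [← hNv, M.N_rec v hv, hNU _ hpa]⟩
    · rintro ⟨hNU, hTL⟩
      exact ⟨by rw [M.N_rec v hv, hNU _ hpa, hTL], hNU⟩
  have hTL : T ⟂ᵢ[ℙ] M.L v := by
    have hnot : (Sum.inl v : V ⊕ V × ℕ) ∉ (range (x (M.pa v))).map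
        ⟨fun i => .inr (v, i), fun _ _ h => by simpa using h⟩ := by simp
    have hsum := M.indep.indepFun_finsetSum_of_notMem M.measurable_family hnot
    rwa [Finset.sum_map, Finset.sum_fn] at hsum
  rw [hevent, (Indep_iff _ _ _).1 (M.indep_sigmaAt (Set.disjoint_singleton_right.2 hvU))
      _ {ω | T ω + M.L v ω = x v} (M.measurableSet_N_eq_on hU x)
      ((hT.add hL) (measurableSet_singleton (x v))),
    measure_add_eq_sum_range_min (n := x (M.pa v)) hTL (hT.mono (M.sigmaAt_le _) le_rfl)
      (M.meas_L v) (fun ω => (Finset.sum_le_sum fun i _ => M.I_le_one v i ω).trans_eq (by simp))]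
  have hb := binomialProb_nonneg (M.alpha_mem_Icc hv) (x (M.pa v))
  have hp := poissonProb_nonneg (mul_nonneg M.lam_pos.le (sub_nonneg.2 (M.alpha_mem_Icc hv).2))
  rw [thinningTransitionProb,
    ENNReal.ofReal_sum_of_nonneg fun k _ => mul_nonneg (hp _) (hb k)]
  congr 1
  refine sum_congr rfl fun k _ => ?_
  rw [ENNReal.ofReal_mul (hp _), mul_comm (ENNReal.ofReal _)]
  exact congrArg₂ (· * ·) (M.measure_thinning_eq_binomialProb hv _ k) (M.L_poisson v hv _)

theorem measure_N_eq_on_insert_root (x : V → ℕ) {S : Finset V} (hroot : M.root ∉ S)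
    (hS : ∀ u ∈ S, M.pa u ∈ insert M.root S) :
    ℙ {ω | ∀ u ∈ insert M.root S, M.N u ω = x u}
      = ENNReal.ofReal (poissonProb lam (x M.root)
          * ∏ u ∈ S, thinningTransitionProb lam (alpha s(M.pa u, u)) (x (M.pa u)) (x u)) := by
  induction S using Finset.induction_on_max_value (G.dist M.root) with
  | empty => simp [M.N_root, M.L_root_poisson]
  | insert v S hvS hmax ih =>
    have hv : v ≠ M.root := fun h => hroot (h ▸ mem_insert_self v S)
    have hpa_ne (u : V) (hu : u ∈ insert v S) : M.pa u ≠ v := by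
      intro h
      have hdist := M.pa_dist u fun hr => hroot (hr ▸ hu)
      rw [h] at hdist
      rcases mem_insert.1 hu with rfl | hu
      · omega
      · have := hmax u hu
        omega
    have hclosed (u : V) (hu : u ∈ insert M.root S) (hur : u ≠ M.root) :
        M.pa u ∈ insert M.root S := by
      have hu : u ∈ S := by simpa [hur] using hu
      simpa [hpa_ne u (mem_insert_of_mem hu)] using hS u (mem_insert_of_mem hu)
    rw [insert_comm, M.measure_N_eq_on_insert x hclosed hv (by simp [hv, hvS])
        (by simpa [hpa_ne v (mem_insert_self v S)] using hS v (mem_insert_self v S)),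
      ih (fun h => hroot (mem_insert_of_mem h))
        (fun u hu => hclosed u (mem_insert_of_mem hu) fun h => hroot (h ▸ mem_insert_of_mem hu)),
      prod_insert hvS, mul_left_comm, ENNReal.ofReal_mul
        (thinningTransitionProb_nonneg M.lam_pos.le (M.alpha_mem_Icc hv) _ _)]
    exact mul_comm _ _

end MPMRF

/-- Joint pmf of the MPMRF: for every `x ∈ ℕ^V`,
`Pr(∩_v {N_v = x_v})` equals the product of the Poisson pmf at the root and, over the
non-root vertices, the convolution of the Poisson innovation pmf with the binomial
thinning pmf of the parent's value. -/
theorem mpmrf_joint_pmf {V : Type} [Fintype V] [DecidableEq V]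
    (G : SimpleGraph V) (lam : ℝ) (alpha : Sym2 V → ℝ)
    (Ω : Type) [MeasureSpace Ω] [IsProbabilityMeasure (ℙ : Measure Ω)]
    (M : MPMRF G lam alpha Ω) (x : V → ℕ) :
    ℙ {ω | ∀ v : V, M.N v ω = x v}
      = ENNReal.ofReal
          ((Real.exp (-lam) * lam ^ (x M.root) / (Nat.factorial (x M.root)))
            * ∏ v ∈ Finset.univ.erase M.root,
                ∑ k ∈ Finset.range (min (x (M.pa v)) (x v) + 1),
                  (Real.exp (-(lam * (1 - alpha s(M.pa v, v))))
                      * (lam * (1 - alpha s(M.pa v, v))) ^ (x v - k)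
                      / (Nat.factorial (x v - k)))
                    * ((x (M.pa v)).choose k)
                    * (alpha s(M.pa v, v)) ^ k
                    * (1 - alpha s(M.pa v, v)) ^ (x (M.pa v) - k)) := by
  have hjoint := M.measure_N_eq_on_insert_root x (notMem_erase M.root univ)
    (fun u _ => by simp)
  simp only [insert_erase (mem_univ M.root), mem_univ, true_imp_iff] at hjoint
  rw [hjoint]
  simp only [thinningTransitionProb, binomialProb, poissonProb, mul_assoc]
end
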